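/- arXiv:1104.1688 — 4 statements merged into one kernel-verified Lean document; each statement's English description precedes it below -/
import Mathlib

section
/- Let X ≥ 0 be a random variable with E[X^{1/ρ + δ}] < ∞ for some δ > 0 and ρ > 0, and let α be a positive function with α ∈ RV_ρ and α(t) → ∞. Then for every z > 0, lim_{ε→0} limsup_{t→∞} t·P[X/α(t) > z/ε] = 0. -/
/-!
With `p = 1 / ρ + δ`, Markov's inequality for `X ^ p` gives
`t * P[X > a α(t)] ≤ E[X ^ p] a⁻ᵖ * t / α(t) ^ p` for every `a > 0`. The function `α ^ p` is
regularly varying with index `ρ p > 1`, so `t / α(t) ^ p` shrinks by a factor close to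
`2 ^ (1 - ρ p) < 1` each time `t` doubles, and therefore tends to `0`. Hence the inner `limsup`
is already `0` for every `ε > 0`.
-/

open MeasureTheory Filter Topology Set

/-- `f` is regularly varying at infinity with index `ρ`. -/
def RegVar (f : ℝ → ℝ) (ρ : ℝ) : Prop :=
  ∀ x : ℝ, 0 < x → Tendsto (fun t => f (t * x) / f t) atTop (𝓝 (x ^ ρ))

theorem tendsto_nhds_zero_of_le_mul_comp_mul {h : ℝ → ℝ} {y c K B : ℝ} (hy : 1 < y)
    (hB : 0 < B) (hc0 : 0 ≤ c) (hc : c < 1) (hnonneg : ∀ t, B ≤ t → 0 ≤ h t)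
    (hbdd : ∀ t ∈ Ico B (y * B), h t ≤ K) (hstep : ∀ t, B ≤ t → h (y * t) ≤ c * h t) :
    Tendsto h atTop (𝓝 0) := by
  have hy0 : 0 < y := by linarith
  have hblock : ∀ n : ℕ, ∀ t ∈ Ico (y ^ n * B) (y ^ (n + 1) * B), h t ≤ c ^ n * K := by
    intro n
    induction n with
    | zero => simpa using hbdd
    | succ n ih =>
      rintro t ⟨hlo, hhi⟩
      have hmem : t / y ∈ Ico (y ^ n * B) (y ^ (n + 1) * B) := by
        constructor
        · rwa [le_div_iff₀ hy0, mul_right_comm, ← pow_succ]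
        · rwa [div_lt_iff₀ hy0, mul_right_comm, ← pow_succ]
      have hBt : B ≤ t / y := (le_mul_of_one_le_left hB.le (one_le_pow₀ hy.le)).trans hmem.1
      calc h t = h (y * (t / y)) := by rw [mul_div_cancel₀ _ hy0.ne']
        _ ≤ c * h (t / y) := hstep _ hBt
        _ ≤ c * (c ^ n * K) := mul_le_mul_of_nonneg_left (ih _ hmem) hc0
        _ = c ^ (n + 1) * K := by ring
  refine tendsto_order.2 ⟨fun a ha => ?_, fun a ha => ?_⟩
  · filter_upwards [eventually_ge_atTop B] with t ht using ha.trans_le (hnonneg t ht)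
  · have hgeom : Tendsto (fun n : ℕ => c ^ n * K) atTop (𝓝 0) := by
      simpa using (tendsto_pow_atTop_nhds_zero_of_lt_one hc0 hc).mul_const K
    obtain ⟨N, hN⟩ := (hgeom.eventually (gt_mem_nhds ha)).exists_forall_of_atTop
    filter_upwards [eventually_ge_atTop (y ^ N * B)] with t ht
    have hBt : 1 ≤ t / B := by
      rw [le_div_iff₀ hB, one_mul]
      exact (le_mul_of_one_le_left hB.le (one_le_pow₀ hy.le)).trans ht
    obtain ⟨n, hn_lo, hn_hi⟩ := exists_nat_pow_near hBt hy
    rw [le_div_iff₀ hB] at hn_lo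
    rw [div_lt_iff₀ hB] at hn_hi
    have hNn : N ≤ n := Nat.lt_succ_iff.1 <| (pow_lt_pow_iff_right₀ hy).1 <|
      (mul_lt_mul_iff_of_pos_right hB).1 (ht.trans_lt hn_hi)
    exact (hblock n t ⟨hn_lo, hn_hi⟩).trans_lt (hN n hNn)

theorem RegVar.rpow {f : ℝ → ℝ} {ρ : ℝ} (hf : RegVar f ρ) (hpos : ∀ᶠ t in atTop, 0 < f t)
    (p : ℝ) : RegVar (fun t => f t ^ p) (ρ * p) := by
  intro x hx
  have hposx : ∀ᶠ t in atTop, 0 < f (t * x) := (tendsto_id.atTop_mul_const hx).eventually hpos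
  rw [Real.rpow_mul hx.le]
  refine ((hf x hx).rpow_const (Or.inl (Real.rpow_pos_of_pos hx ρ).ne')).congr' ?_
  filter_upwards [hpos, hposx] with t ht htx
  exact Real.div_rpow htx.le ht.le p

theorem RegVar.tendsto_id_div_nhds_zero {f : ℝ → ℝ} {κ : ℝ} (hf : RegVar f κ) (hκ : 1 < κ)
    (hf1 : ∀ᶠ t in atTop, 1 ≤ f t) : Tendsto (fun t => t / f t) atTop (𝓝 0) := by
  have h2κ : (2 : ℝ) < 2 ^ κ := by
    simpa using Real.rpow_lt_rpow_of_exponent_lt one_lt_two hκ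
  obtain ⟨q, hq2, hqκ⟩ := exists_between h2κ
  obtain ⟨B, hB⟩ := (((hf 2 two_pos).eventually (eventually_ge_nhds hqκ)).and
    (hf1.and (eventually_ge_atTop 1))).exists_forall_of_atTop
  have hq0 : 0 < q := by linarith
  refine tendsto_nhds_zero_of_le_mul_comp_mul (c := 2 / q) (K := 2 * B) (B := B) one_lt_two
    (by linarith [(hB B le_rfl).2.2]) (by positivity) ((div_lt_one hq0).2 hq2) ?_ ?_ ?_
  · intro t ht
    exact div_nonneg (by linarith [(hB t ht).2.2]) (by linarith [(hB t ht).2.1])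
  · rintro t ⟨ht1, ht2⟩
    obtain ⟨-, hft, ht⟩ := hB t ht1
    exact (div_le_self (by linarith) hft).trans ht2.le
  · intro t ht
    obtain ⟨hratio, hft, ht0⟩ := hB t ht
    have hft0 : 0 < f t := by linarith
    have hdouble : q * f t ≤ f (2 * t) := by
      rw [mul_comm 2 t]; exact (le_div_iff₀ hft0).1 hratio
    calc 2 * t / f (2 * t) ≤ 2 * t / (q * f t) :=
          div_le_div_of_nonneg_left (by linarith) (by positivity) hdouble
      _ = 2 / q * (t / f t) := by field_simp

theorem RegVar.tendsto_id_div_rpow_nhds_zero {α : ℝ → ℝ} {ρ p : ℝ} (hα : RegVar α ρ)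
    (hαtop : Tendsto α atTop atTop) (hp : 0 < p) (hρp : 1 < ρ * p) :
    Tendsto (fun t => t / α t ^ p) atTop (𝓝 0) :=
  (hα.rpow (hαtop.eventually_gt_atTop 0) p).tendsto_id_div_nhds_zero hρp
    (((tendsto_rpow_atTop hp).comp hαtop).eventually_ge_atTop 1)

theorem measureReal_lt_le_integral_rpow_div {Ω : Type*} [MeasurableSpace Ω] {P : Measure Ω}
    [IsFiniteMeasure P] {X : Ω → ℝ} (hX : ∀ ω, 0 ≤ X ω) {p : ℝ} (hp : 0 < p)
    (hmom : Integrable (fun ω => X ω ^ p) P) {s : ℝ} (hs : 0 < s) :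
    P.real {ω | s < X ω} ≤ (∫ ω, X ω ^ p ∂P) / s ^ p := by
  rw [le_div_iff₀ (by positivity), mul_comm]
  calc s ^ p * P.real {ω | s < X ω} ≤ s ^ p * P.real {ω | s ^ p ≤ X ω ^ p} := by
        refine mul_le_mul_of_nonneg_left (measureReal_mono fun ω hω => ?_) (by positivity)
        exact Real.rpow_le_rpow hs.le (le_of_lt hω) hp.le
    _ ≤ ∫ ω, X ω ^ p ∂P :=
        mul_meas_ge_le_integral_of_nonneg (ae_of_all _ fun ω => Real.rpow_nonneg (hX ω) p) hmom _

theorem tendsto_mul_measureReal_div_gt_nhds_zero {Ω : Type*} [MeasurableSpace Ω] {P : Measure Ω}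
    [IsFiniteMeasure P] {X : Ω → ℝ} (hX : ∀ ω, 0 ≤ X ω) {p : ℝ} (hp : 0 < p)
    (hmom : Integrable (fun ω => X ω ^ p) P) {α : ℝ → ℝ} (hαpos : ∀ᶠ t in atTop, 0 < α t)
    (hratio : Tendsto (fun t => t / α t ^ p) atTop (𝓝 0)) {a : ℝ} (ha : 0 < a) :
    Tendsto (fun t => t * P.real {ω | X ω / α t > a}) atTop (𝓝 0) := by
  set M := ∫ ω, X ω ^ p ∂P
  have hbound := hratio.const_mul (M / a ^ p)
  rw [mul_zero] at hbound
  refine squeeze_zero' ?_ ?_ hbound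
  · filter_upwards [eventually_ge_atTop 0] with t ht using mul_nonneg ht measureReal_nonneg
  filter_upwards [eventually_ge_atTop 0, hαpos] with t ht hαt
  have hset : {ω | X ω / α t > a} = {ω | a * α t < X ω} := by
    ext ω; simp only [mem_ofPred_eq, gt_iff_lt, lt_div_iff₀ hαt]
  calc t * P.real {ω | X ω / α t > a} ≤ t * (M / (a * α t) ^ p) := by
        rw [hset]
        exact mul_le_mul_of_nonneg_left
          (measureReal_lt_le_integral_rpow_div hX hp hmom (by positivity)) ht
    _ = M / a ^ p * (t / α t ^ p) := by
        rw [Real.mul_rpow ha.le hαt.le]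
        have : 0 < a ^ p := by positivity
        have : 0 < α t ^ p := by positivity
        field_simp

theorem stmt_1_general {Ω : Type*} [MeasurableSpace Ω] (P : Measure Ω) [IsProbabilityMeasure P]
    (X : Ω → ℝ) (hXpos : ∀ ω, 0 ≤ X ω)
    (ρ δ : ℝ) (hρ : 0 < ρ) (hδ : 0 < δ)
    (hmom : Integrable (fun ω => X ω ^ (1 / ρ + δ)) P)
    (α : ℝ → ℝ) (hαRV : RegVar α ρ)
    (hαtop : Tendsto α atTop atTop) :
    ∀ z : ℝ, 0 < z →
      Tendsto (fun ε : ℝ =>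
          Filter.limsup (fun t => t * (P {ω | X ω / α t > z / ε}).toReal) atTop)
        (𝓝[>] (0 : ℝ)) (𝓝 0) := by
  intro z hz
  have hp : 0 < 1 / ρ + δ := by positivity
  have hρp : 1 < ρ * (1 / ρ + δ) := by
    rw [mul_add, mul_one_div_cancel hρ.ne']
    linarith [mul_pos hρ hδ]
  have hratio := hαRV.tendsto_id_div_rpow_nhds_zero hαtop hp hρp
  refine tendsto_const_nhds.congr' ?_
  filter_upwards [self_mem_nhdsWithin] with ε (hε : 0 < ε)
  exact (tendsto_mul_measureReal_div_gt_nhds_zero hXpos hp hmom (hαtop.eventually_gt_atTop 0)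
    hratio (div_pos hz hε)).limsup_eq.symm

theorem stmt_1 {Ω : Type*} [MeasurableSpace Ω] (P : Measure Ω) [IsProbabilityMeasure P]
    (X : Ω → ℝ) (hXpos : ∀ ω, 0 ≤ X ω)
    (ρ δ : ℝ) (hρ : 0 < ρ) (hδ : 0 < δ)
    (hmom : Integrable (fun ω => X ω ^ (1 / ρ + δ)) P)
    (α : ℝ → ℝ) (hαpos : ∀ t, 0 < α t) (hαRV : RegVar α ρ)
    (hαtop : Tendsto α atTop atTop) :
    ∀ z : ℝ, 0 < z →
      Tendsto (fun ε : ℝ =>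
          Filter.limsup (fun t => t * (P {ω | X ω / α t > z / ε}).toReal) atTop)
        (𝓝[>] (0 : ℝ)) (𝓝 0) :=
  stmt_1_general P X hXpos ρ δ hρ hδ hmom α hαRV hαtop
end

section
/- Let ρ < 0, γ < 0 and let (X̃, Ỹ) be random variables with X̃ ≥ 1, Ỹ ≥ 1, satisfying t·P[(X̃/α̃(t), Ỹ/ã(t)) ∈ ·] → μ vaguely on [0,∞] × (0,∞], where α̃ ∈ RV_{-ρ}, ã ∈ RV_{-γ} (both tending to ∞), μ nondegenerate Radon, and t·P[Ỹ/ã(t) > y] → y^{1/γ} for y > 0. If E[X̃^{1/|γ| + δ}] < ∞ for some δ > 0, then (X̃Ỹ, X̃ + Ỹ - 1), scaled by (α̃(t)ã(t), ã(t)), satisfies t·P[(X̃Ỹ/(α̃(t)ã(t)), (X̃+Ỹ-1)/ã(t)) ∈ ·] → μ∘T₂⁻¹ vaguely on [0,∞] × (0,∞], where T₂(x,y) = (xy, y). -/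
open MeasureTheory Filter Topology Set

/-- Vague convergence of `t ↦ t · P[Z t ∈ ·]` to `μ` on the cone
`[0,∞] × (0,∞]`, tested on continuity sets bounded away from `{y = 0}`. -/
def VagueConvCone {Ω : Type*} [MeasurableSpace Ω] (P : Measure Ω)
    (Z : ℝ → Ω → ℝ × ℝ) (μ : Measure (ℝ × ℝ)) : Prop :=
  ∀ B : Set (ℝ × ℝ), MeasurableSet B → (∃ z > 0, B ⊆ {p | z < p.2}) →
    μ (frontier B) = 0 →
    Tendsto (fun t => t * (P {ω | Z t ω ∈ B}).toReal) atTop (𝓝 ((μ B).toReal))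

/-- `μ` is a Radon measure on the cone: finite on sets bounded away from `{y = 0}`. -/
def RadonCone (μ : Measure (ℝ × ℝ)) : Prop := ∀ z : ℝ, 0 < z → μ {p | z < p.2} < ⊤

/-!
Write `W t = T₂ (X̃ / α̃ t, Ỹ / ã t) = (X̃ Ỹ / (α̃ t ã t), Ỹ / ã t)`. By the continuous mapping
theorem, `t · P[W t ∈ ·]` converges vaguely to `μ ∘ T₂⁻¹`, and the pair of interest differs from
`W t` only by `(X̃ - 1) / ã t` in the second coordinate. Since `ã ∈ RV_{-γ}` eventually dominates
`t ^ r` for every `r < -γ`, Markov's inequality and the moment of order `p = 1/|γ| + δ > 1/(-γ)`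
give `t · P[X̃ / ã t ≥ ε] = O(t / ã(t)^p) → 0`. A perturbation that is negligible at this scale
does not change the vague limit: sandwich `B` between an inner and an outer thickening whose
boundaries are null for the (locally finite) limit measure.
-/

open Metric

theorem rpow_div_le_of_doubling {a : ℝ → ℝ} {r T : ℝ} (hr : 0 ≤ r) (hT : 0 < T)
    (hone : ∀ t ≥ T, 1 ≤ a t) (hdouble : ∀ t ≥ T, 2 ^ r * a t ≤ a (t * 2))
    {s : ℝ} (hs : T ≤ s) : (s / (2 * T)) ^ r ≤ a s := by
  have hbase : ∀ s, T ≤ s → s ≤ 2 * T → (s / (2 * T)) ^ r ≤ a s := fun s hTs hs2T =>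
    (Real.rpow_le_one (div_nonneg (by linarith) (by linarith))
      ((div_le_one (by linarith)).2 hs2T) hr).trans (hone s hTs)
  obtain ⟨n, hn⟩ := pow_unbounded_of_one_lt (s / (2 * T)) one_lt_two
  induction n generalizing s with
  | zero => exact hbase s hs ((div_le_one (by linarith)).1 (by simpa using hn.le))
  | succ n ih =>
    rcases le_or_gt s (2 * T) with hs2T | hs2T
    · exact hbase s hs hs2T
    have hhalf : (s / 2 / (2 * T)) ^ r ≤ a (s / 2) :=
      ih (by linarith) (by rw [div_right_comm, div_lt_iff₀ two_pos, ← pow_succ]; exact hn)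
    calc (s / (2 * T)) ^ r = 2 ^ r * (s / 2 / (2 * T)) ^ r := by
          rw [← Real.mul_rpow (by norm_num) (div_nonneg (by linarith) (by linarith))]; ring_nf
      _ ≤ 2 ^ r * a (s / 2) := by gcongr
      _ ≤ a s := by simpa using hdouble (s / 2) (by linarith)

theorem RegVar.exists_pos_mul_rpow_le {a : ℝ → ℝ} {c r : ℝ} (ha : RegVar a c)
    (hatop : Tendsto a atTop atTop) (hr : 0 ≤ r) (hrc : r < c) :
    ∃ C > 0, ∀ᶠ t in atTop, C * t ^ r ≤ a t := by
  have h2 : (2 : ℝ) ^ r < 2 ^ c := Real.rpow_lt_rpow_of_exponent_lt one_lt_two hrc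
  obtain ⟨T₀, hT₀⟩ := eventually_atTop.1
    (((ha 2 two_pos).eventually_const_lt h2).and (hatop.eventually_ge_atTop 1))
  set T := max T₀ 1
  have hT : 0 < T := lt_max_of_lt_right one_pos
  refine ⟨((2 * T) ^ r)⁻¹, by positivity, eventually_atTop.2 ⟨T, fun s hs => ?_⟩⟩
  have hdouble : ∀ t ≥ T, 2 ^ r * a t ≤ a (t * 2) := fun t ht => by
    obtain ⟨hlt, hone⟩ := hT₀ t (le_of_max_le_left ht)
    exact ((lt_div_iff₀ (by linarith)).1 hlt).le
  have := rpow_div_le_of_doubling hr hT (fun t ht => (hT₀ t (le_of_max_le_left ht)).2) hdouble hs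
  rwa [Real.div_rpow (by linarith [le_max_right T₀ 1]) (by positivity), div_eq_inv_mul] at this

theorem RegVar.tendsto_div_rpow_zero {a : ℝ → ℝ} {c p : ℝ} (ha : RegVar a c)
    (hatop : Tendsto a atTop atTop) (hc : 0 < c) (hcp : 1 < c * p) :
    Tendsto (fun t => t / a t ^ p) atTop (𝓝 0) := by
  have hp : 0 < p := pos_of_mul_pos_right (one_pos.trans hcp) hc.le
  obtain ⟨r, hpr, hrc⟩ := exists_between ((div_lt_iff₀ hp).2 hcp)
  have hrp : 1 < r * p := (div_lt_iff₀ hp).1 hpr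
  obtain ⟨C, hC, hCa⟩ := ha.exists_pos_mul_rpow_le hatop ((one_div_pos.2 hp).trans hpr).le hrc
  have hlim : Tendsto (fun t : ℝ => (C ^ p)⁻¹ * t ^ (-(r * p - 1))) atTop (𝓝 0) := by
    rw [← mul_zero (C ^ p)⁻¹]
    exact (tendsto_rpow_neg_atTop (by linarith)).const_mul _
  refine squeeze_zero' ?_ ?_ hlim
  · filter_upwards [eventually_ge_atTop 0, hCa] with t ht hCt
    exact div_nonneg ht (Real.rpow_nonneg ((by positivity : 0 ≤ C * t ^ r).trans hCt) p)
  · filter_upwards [eventually_gt_atTop 0, hCa] with t ht hCt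
    calc t / a t ^ p ≤ t / (C * t ^ r) ^ p := by gcongr
      _ = (C ^ p)⁻¹ * t ^ (-(r * p - 1)) := by
        rw [Real.mul_rpow hC.le (by positivity), ← Real.rpow_mul ht.le, neg_sub,
          Real.rpow_sub ht, Real.rpow_one]
        field_simp

theorem tendsto_mul_measureReal_le_div_of_integrable_rpow {Ω : Type*} [MeasurableSpace Ω]
    (P : Measure Ω) [IsFiniteMeasure P] {X : Ω → ℝ} (hX : ∀ ω, 0 ≤ X ω) {p : ℝ} (hp : 0 ≤ p)
    (hmom : Integrable (fun ω => X ω ^ p) P) {a : ℝ → ℝ} (ha : ∀ᶠ t in atTop, 0 < a t)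
    (hgrow : Tendsto (fun t => t / a t ^ p) atTop (𝓝 0)) {ε : ℝ} (hε : 0 < ε) :
    Tendsto (fun t => t * P.real {ω | ε ≤ X ω / a t}) atTop (𝓝 0) := by
  set M := ∫ ω, X ω ^ p ∂P
  have hlim : Tendsto (fun t => M / ε ^ p * (t / a t ^ p)) atTop (𝓝 0) := by
    rw [← mul_zero (M / ε ^ p)]
    exact hgrow.const_mul _
  refine squeeze_zero' ?_ ?_ hlim
  · filter_upwards [eventually_ge_atTop 0] with t ht using mul_nonneg ht measureReal_nonneg
  filter_upwards [eventually_ge_atTop 0, ha] with t ht hat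
  have hεa : 0 < (ε * a t) ^ p := Real.rpow_pos_of_pos (mul_pos hε hat) p
  have hmarkov : P.real {ω | ε ≤ X ω / a t} ≤ M / (ε * a t) ^ p := by
    rw [le_div_iff₀ hεa, mul_comm]
    refine le_trans ?_ (mul_meas_ge_le_integral_of_nonneg
      (Eventually.of_forall fun ω => Real.rpow_nonneg (hX ω) p) hmom ((ε * a t) ^ p))
    refine mul_le_mul_of_nonneg_left (measureReal_mono fun ω hω => ?_) hεa.le
    exact Real.rpow_le_rpow (by positivity) ((le_div_iff₀ hat).1 hω) hp
  calc t * P.real {ω | ε ≤ X ω / a t} ≤ t * (M / (ε * a t) ^ p) := by gcongr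
    _ = M / ε ^ p * (t / a t ^ p) := by
      rw [Real.mul_rpow hε.le hat.le]
      field_simp

section Thickening

variable {X : Type*} [PseudoMetricSpace X] [MeasurableSpace X] [OpensMeasurableSpace X]
  (μ : Measure X) [IsFiniteMeasure μ] {s : Set X} {c R : ℝ}

theorem exists_null_frontier_measureReal_thickening_lt (hs : μ (frontier s) = 0)
    (hc : μ.real s < c) (hR : 0 < R) :
    ∃ r ∈ Ioo 0 R, μ (frontier (thickening r s)) = 0 ∧ μ.real (thickening r s) < c := by
  have hclosure : μ (closure s) = μ s := by
    refine le_antisymm ?_ (measure_mono subset_closure)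
    calc μ (closure s) ≤ μ s + μ (frontier s) := by
          rw [closure_eq_self_union_frontier]; exact measure_union_le _ _
      _ = μ s := by rw [hs, add_zero]
  have hlim : Tendsto (fun r => μ.real (thickening r s)) (𝓝[>] 0) (𝓝 (μ.real s)) := by
    have := tendsto_measure_thickening (μ := μ) (s := s) ⟨1, one_pos, measure_ne_top _ _⟩
    rw [hclosure] at this
    exact (ENNReal.tendsto_toReal (measure_ne_top _ _)).comp this
  obtain ⟨u, hu, hsub⟩ := mem_nhdsGT_iff_exists_Ioo_subset.1 (hlim.eventually_lt_const hc)
  obtain ⟨r, ⟨hr0, hr⟩, hfr⟩ := exists_null_frontier_thickening μ s (lt_min hR hu)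
  exact ⟨r, ⟨hr0, hr.trans_le (min_le_left _ _)⟩, hfr,
    hsub ⟨hr0, hr.trans_le (min_le_right _ _)⟩⟩

theorem exists_null_frontier_lt_measureReal_compl_thickening_compl (hsm : MeasurableSet s)
    (hs : μ (frontier s) = 0) (hc : c < μ.real s) (hR : 0 < R) :
    ∃ r ∈ Ioo 0 R, μ (frontier (thickening r sᶜ)) = 0 ∧ c < μ.real (thickening r sᶜ)ᶜ := by
  obtain ⟨r, hr, hfr, hlt⟩ := exists_null_frontier_measureReal_thickening_lt μ
    (c := μ.real univ - c) (by rwa [frontier_compl]) (by rw [measureReal_compl hsm]; linarith) hR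
  exact ⟨r, hr, hfr, by rw [measureReal_compl isOpen_thickening.measurableSet]; linarith⟩

end Thickening

section Perturbation

variable {Ω X : Type*} [PseudoMetricSpace X] {Z W : Ω → X} {D : Ω → ℝ} (E : Set X) (r : ℝ)

theorem mem_thickening_of_dist_le_of_lt (hZW : ∀ ω, dist (Z ω) (W ω) ≤ D ω) {ω : Ω}
    (hD : D ω < r) (hZ : Z ω ∈ E) : W ω ∈ thickening r E :=
  mem_thickening_iff.2 ⟨_, hZ, by rw [dist_comm]; exact (hZW ω).trans_lt hD⟩

variable [MeasurableSpace Ω] {P : Measure Ω} [IsFiniteMeasure P]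

theorem measureReal_mem_le_thickening_add (hZW : ∀ ω, dist (Z ω) (W ω) ≤ D ω) :
    P.real {ω | Z ω ∈ E} ≤ P.real {ω | W ω ∈ thickening r E} + P.real {ω | r ≤ D ω} := by
  refine (measureReal_mono fun ω hω => ?_).trans (measureReal_union_le _ _)
  by_cases hDr : r ≤ D ω
  · exact Or.inr hDr
  · exact Or.inl (mem_thickening_of_dist_le_of_lt E r hZW (not_le.1 hDr) hω)

theorem measureReal_compl_thickening_compl_le_add (hZW : ∀ ω, dist (Z ω) (W ω) ≤ D ω) :
    P.real {ω | W ω ∈ (thickening r Eᶜ)ᶜ} ≤ P.real {ω | Z ω ∈ E} + P.real {ω | r ≤ D ω} := by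
  refine (measureReal_mono fun ω hω => ?_).trans (measureReal_union_le _ _)
  by_cases hDr : r ≤ D ω
  · exact Or.inr hDr
  · exact Or.inl (by_contra fun hZ =>
      hω (mem_thickening_of_dist_le_of_lt _ r hZW (not_le.1 hDr) hZ))

end Perturbation

theorem closure_thickening_subset_snd_ge {B : Set (ℝ × ℝ)} {z : ℝ} (hB : B ⊆ {p | z < p.2})
    (r : ℝ) : closure (thickening r B) ⊆ {p | z - r ≤ p.2} := by
  refine closure_minimal (fun q hq => ?_) (isClosed_le continuous_const continuous_snd)
  obtain ⟨b, hb, hqb⟩ := mem_thickening_iff.1 hq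
  have hb2 : z < b.2 := hB hb
  have hdist : |q.2 - b.2| ≤ dist q b := by
    rw [Prod.dist_eq, ← Real.dist_eq]; exact le_max_right _ _
  show z - r ≤ q.2
  linarith [neg_abs_le (q.2 - b.2)]

theorem RadonCone.map {μ : Measure (ℝ × ℝ)} (hμ : RadonCone μ) {T : ℝ × ℝ → ℝ × ℝ}
    (hT : Measurable T) (hsnd : ∀ p, (T p).2 ≤ p.2) : RadonCone (μ.map T) := fun z hz => by
  rw [Measure.map_apply hT (measurableSet_lt measurable_const measurable_snd)]
  exact (measure_mono fun p hp => lt_of_lt_of_le hp (hsnd p)).trans_lt (hμ z hz)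

namespace VagueConvCone

variable {Ω : Type*} [MeasurableSpace Ω] {P : Measure Ω}

theorem map {W : ℝ → Ω → ℝ × ℝ} {μ : Measure (ℝ × ℝ)} (hW : VagueConvCone P W μ)
    {T : ℝ × ℝ → ℝ × ℝ} (hT : Continuous T) (hsnd : ∀ p, (T p).2 ≤ p.2) :
    VagueConvCone P (fun t ω => T (W t ω)) (μ.map T) := by
  intro B hB ⟨z, hz, hBz⟩ hfr
  rw [Measure.map_apply hT.measurable isClosed_frontier.measurableSet] at hfr
  rw [Measure.map_apply hT.measurable hB]
  exact hW _ (hT.measurable hB) ⟨z, hz, fun p hp => lt_of_lt_of_le (hBz hp) (hsnd p)⟩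
    (measure_mono_null (hT.frontier_preimage_subset B) hfr)

theorem of_dist_le [IsFiniteMeasure P] {Z W : ℝ → Ω → ℝ × ℝ} {ν : Measure (ℝ × ℝ)}
    (hW : VagueConvCone P W ν) (hν : RadonCone ν) (D : ℝ → Ω → ℝ)
    (hZW : ∀ t ω, dist (Z t ω) (W t ω) ≤ D t ω)
    (hD : ∀ ε > 0, Tendsto (fun t => t * P.real {ω | ε ≤ D t ω}) atTop (𝓝 0)) :
    VagueConvCone P Z ν := by
  intro B hB ⟨z, hz, hBz⟩ hfr
  -- Every set below lies in `S`, where `ν` is finite.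
  set S : Set (ℝ × ℝ) := {p | z / 2 < p.2}
  have : IsFiniteMeasure (ν.restrict S) := isFiniteMeasure_restrict.2 (hν _ (half_pos hz)).ne
  have hνS : ∀ E ⊆ S, ν.restrict S E = ν E := fun E hE => Measure.restrict_eq_self _ hE
  have hclosureS : ∀ r < z / 2, ∀ E ⊆ thickening r B, closure E ⊆ S := fun r hr E hE =>
    (closure_mono hE).trans ((closure_thickening_subset_snd_ge hBz r).trans
      fun p (hp : z - r ≤ p.2) => show z / 2 < p.2 by linarith)
  have hWE : ∀ r, 0 < r → r < z / 2 → ∀ E ⊆ thickening r B, MeasurableSet E →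
      ν.restrict S (frontier E) = 0 →
      Tendsto (fun t => t * P.real {ω | W t ω ∈ E}) atTop (𝓝 ((ν.restrict S).real E)) := by
    intro r hr0 hr E hEB hE hfrE
    have hES := subset_closure.trans (hclosureS r hr E hEB)
    rw [hνS _ (frontier_subset_closure.trans (hclosureS r hr E hEB))] at hfrE
    rw [measureReal_def, hνS E hES]
    exact hW E hE ⟨z / 2, half_pos hz, hES⟩ hfrE
  have hBS : closure B ⊆ S :=
    hclosureS (z / 4) (by linarith) B (self_subset_thickening (by positivity) B)
  have hfrS : ν.restrict S (frontier B) = 0 := by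
    rwa [hνS _ (frontier_subset_closure.trans hBS)]
  show Tendsto (fun t => t * P.real {ω | Z t ω ∈ B}) atTop (𝓝 (ν.real B))
  rw [measureReal_def, ← hνS B (subset_closure.trans hBS), ← measureReal_def]
  refine tendsto_order.2 ⟨fun c hc => ?_, fun c hc => ?_⟩
  · obtain ⟨r, ⟨hr0, hr⟩, hfrV, hcV⟩ :=
      exists_null_frontier_lt_measureReal_compl_thickening_compl _ hB hfrS hc (half_pos hz)
    have hVB : (thickening r Bᶜ)ᶜ ⊆ B := compl_subset_comm.1 (self_subset_thickening hr0 _)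
    have hV := hWE r hr0 hr _ (hVB.trans (self_subset_thickening hr0 B))
      isOpen_thickening.isClosed_compl.measurableSet (by rwa [frontier_compl])
    filter_upwards [(hV.sub (hD r hr0)).eventually_const_lt (by rwa [sub_zero]),
      eventually_ge_atTop 0] with t hlt ht
    refine hlt.trans_le ?_
    rw [← mul_sub]
    exact mul_le_mul_of_nonneg_left (sub_le_iff_le_add.2
      (measureReal_compl_thickening_compl_le_add B r (hZW t))) ht
  · obtain ⟨r, ⟨hr0, hr⟩, hfrU, hcU⟩ :=
      exists_null_frontier_measureReal_thickening_lt _ hfrS hc (half_pos hz)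
    have hU := hWE r hr0 hr _ subset_rfl isOpen_thickening.measurableSet hfrU
    filter_upwards [(hU.add (hD r hr0)).eventually_lt_const (by rwa [add_zero]),
      eventually_ge_atTop 0] with t hlt ht
    refine lt_of_le_of_lt ?_ hlt
    rw [← mul_add]
    exact mul_le_mul_of_nonneg_left (measureReal_mem_le_thickening_add B r (hZW t)) ht

end VagueConvCone

theorem stmt_5_general {Ω : Type*} [MeasurableSpace Ω] (P : Measure Ω) [IsProbabilityMeasure P]
    (Xt Yt : Ω → ℝ) (hXt : ∀ ω, 1 ≤ Xt ω)
    (γ δ : ℝ) (hγ : γ < 0) (hδ : 0 < δ)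
    (αt at' : ℝ → ℝ) (hapos : ∀ t, 0 < at' t)
    (haRV : RegVar at' (-γ))
    (hatop : Tendsto at' atTop atTop)
    (μ : Measure (ℝ × ℝ)) (hRadon : RadonCone μ)
    (hconv : VagueConvCone P (fun t ω => (Xt ω / αt t, Yt ω / at' t)) μ)
    (hmom : Integrable (fun ω => Xt ω ^ (1 / |γ| + δ)) P) :
    VagueConvCone P
      (fun t ω => (Xt ω * Yt ω / (αt t * at' t), (Xt ω + Yt ω - 1) / at' t))
      (Measure.map (fun p : ℝ × ℝ => (p.1 * p.2, p.2)) μ) := by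
  have hcont : Continuous fun p : ℝ × ℝ => (p.1 * p.2, p.2) := by fun_prop
  have hgrow : Tendsto (fun t => t / at' t ^ (1 / |γ| + δ)) atTop (𝓝 0) :=
    haRV.tendsto_div_rpow_zero hatop (neg_pos.2 hγ) (by
      rw [abs_of_neg hγ, mul_add, mul_one_div_cancel (neg_ne_zero.2 hγ.ne)]
      nlinarith)
  refine (hconv.map hcont fun _ => le_rfl).of_dist_le (hRadon.map hcont.measurable fun _ => le_rfl)
    (fun t ω => Xt ω / at' t) (fun t ω => ?_) fun ε hε =>
      tendsto_mul_measureReal_le_div_of_integrable_rpow P (fun ω => zero_le_one.trans (hXt ω))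
        (add_nonneg (by positivity) hδ.le) hmom (Eventually.of_forall hapos) hgrow hε
  have hsnd : (Xt ω + Yt ω - 1) / at' t - Yt ω / at' t = (Xt ω - 1) / at' t := by ring
  rw [Prod.dist_eq, div_mul_div_comm, dist_self, Real.dist_eq, hsnd,
    abs_of_nonneg (div_nonneg (sub_nonneg.2 (hXt ω)) (hapos t).le)]
  exact max_le (div_nonneg (by linarith [hXt ω]) (hapos t).le)
    (div_le_div_of_nonneg_right (by linarith) (hapos t).le)

theorem stmt_5 {Ω : Type*} [MeasurableSpace Ω] (P : Measure Ω) [IsProbabilityMeasure P]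
    (Xt Yt : Ω → ℝ) (hXt : ∀ ω, 1 ≤ Xt ω) (hYt : ∀ ω, 1 ≤ Yt ω)
    (ρ γ δ : ℝ) (hρ : ρ < 0) (hγ : γ < 0) (hδ : 0 < δ)
    (αt at' : ℝ → ℝ) (hαpos : ∀ t, 0 < αt t) (hapos : ∀ t, 0 < at' t)
    (hαRV : RegVar αt (-ρ)) (haRV : RegVar at' (-γ))
    (hαtop : Tendsto αt atTop atTop) (hatop : Tendsto at' atTop atTop)
    (μ : Measure (ℝ × ℝ)) (hRadon : RadonCone μ) (hμ : μ ≠ 0)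
    (hconv : VagueConvCone P (fun t ω => (Xt ω / αt t, Yt ω / at' t)) μ)
    (hYtail : ∀ y : ℝ, 0 < y →
      Tendsto (fun t => t * (P {ω | Yt ω / at' t > y}).toReal) atTop (𝓝 (y ^ (1 / γ))))
    (hmom : Integrable (fun ω => Xt ω ^ (1 / |γ| + δ)) P) :
    VagueConvCone P
      (fun t ω => (Xt ω * Yt ω / (αt t * at' t), (Xt ω + Yt ω - 1) / at' t))
      (Measure.map (fun p : ℝ × ℝ => (p.1 * p.2, p.2)) μ) :=
  stmt_5_general P Xt Yt hXt γ δ hγ hδ αt at' hapos haRV hatop μ hRadon hconv hmom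
end

section
/- Let X and Y be nonnegative random variables with 0 ≤ X ≤ β(∞) for some β(∞) > 0, and suppose: (i) t·P[Y/a(t) > y] → y^{-1/γ} for all y > 0, where γ > 0 and a ∈ RV_γ; (ii) t·P[((β(∞)-X)/α(t), Y/a(t)) ∈ ·] → μ vaguely on [0,∞] × (0,∞] with α ∈ RV_ρ, ρ < 0, and μ nondegenerate Radon. Then for all z > 0, t·P[XY/a(t) > z] → z^{-1/γ}·β(∞)^{1/γ}; in particular XY has regularly varying tail of index -1/γ. -/
/-!
The upper bound is immediate from `X ≤ βinf`: `{XY > a t * z} ⊆ {Y > a t * (z / βinf)}`.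
For the lower bound, `XY > β' Y` on `{X > β'}` for any level `β' < βinf`, and the remaining event
`{βinf - X ≥ η, Y > a t * z}` is negligible: since `α → 0`, at a comparable time `s ∈ [t, 2t]`
it lies inside `{(βinf - X) / α s > K, Y / a s > z'}`, whose normalized probability tends to
`μ ((K, ∞) × (z', ∞))`, small for `K` large. Neither `α` nor `a` is assumed measurable or
monotone, so `α → 0` is only available along geometric sequences, and `a s` is compared with
`a t` through the monotonicity of the tail of `Y`. Regular variation of the tail `T` of `XY`
then follows by evaluating its normalized limit at the time `c / T u`, where `a` is comparable
to `u`.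
-/

open MeasureTheory Filter Topology Set

theorem exists_mem_measure_eq_zero_of_pairwise_disjoint {α : Type*} [MeasurableSpace α]
    (μ : Measure α) {S : ℝ → Set α} (hS : ∀ y, MeasurableSet (S y))
    (hdisj : Pairwise (Function.onFun Disjoint S)) (hfin : μ (⋃ y, S y) ≠ ⊤) {I : Set ℝ}
    (hI : volume I ≠ 0) : ∃ y ∈ I, μ (S y) = 0 := by
  by_contra! h
  have hpos : I ⊆ {y | 0 < μ (S y)} := fun y hy => pos_iff_ne_zero.2 (h y hy)
  exact hI (measure_mono_null hpos
    ((Measure.countable_meas_pos_of_disjoint_of_meas_iUnion_ne_top μ hS hdisj hfin).measure_zero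
      volume))

namespace RadonCone

variable {μ : Measure (ℝ × ℝ)} (hμ : RadonCone μ)
include hμ

theorem exists_mem_Ioo_measure_snd_eq_zero {l r : ℝ} (hl : 0 < l) (hlr : l < r) :
    ∃ z ∈ Ioo l r, μ {p | p.2 = z} = 0 := by
  obtain ⟨z, hz, hz0⟩ := exists_mem_measure_eq_zero_of_pairwise_disjoint μ
    (S := fun y => {p : ℝ × ℝ | p.2 = y ∧ l < p.2})
    (fun y => (measurable_snd (measurableSet_singleton y)).inter
      (measurable_snd measurableSet_Ioi))
    (fun y y' hyy' => Set.disjoint_left.2 fun p hp hp' => hyy' (hp.1.symm.trans hp'.1))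
    (ne_top_of_le_ne_top (hμ l hl).ne (measure_mono (iUnion_subset fun y p hp => hp.2)))
    (I := Ioo l r) (by simp [hlr])
  refine ⟨z, hz, measure_mono_null (fun p (hp : p.2 = z) => ?_) hz0⟩
  exact ⟨hp, hp ▸ hz.1⟩

theorem exists_mem_Ioo_measure_fst_eq_zero {z : ℝ} (hz : 0 < z) (N : ℝ) :
    ∃ K ∈ Ioo N (N + 1), μ {p | p.1 = K ∧ z < p.2} = 0 :=
  exists_mem_measure_eq_zero_of_pairwise_disjoint μ
    (S := fun K => {p : ℝ × ℝ | p.1 = K ∧ z < p.2})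
    (fun K => (measurable_fst (measurableSet_singleton K)).inter
      (measurable_snd measurableSet_Ioi))
    (fun K K' hKK' => Set.disjoint_left.2 fun p hp hp' => hKK' (hp.1.symm.trans hp'.1))
    (ne_top_of_le_ne_top (hμ z hz).ne (measure_mono (iUnion_subset fun K p hp => hp.2)))
    (by simp)

theorem tendsto_measure_Ioi_prod_Ioi {z : ℝ} (hz : 0 < z) :
    Tendsto (fun K => μ (Ioi K ×ˢ Ioi z)) atTop (𝓝 0) := by
  have h := tendsto_measure_iInter_atTop (μ := μ) (s := fun K : ℝ => Ioi K ×ˢ Ioi z)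
    (fun K => (measurableSet_Ioi.prod measurableSet_Ioi).nullMeasurableSet)
    (fun K K' hKK' => prod_mono (Ioi_subset_Ioi hKK') le_rfl)
    ⟨0, ne_top_of_le_ne_top (hμ z hz).ne (measure_mono fun p hp => hp.2)⟩
  have hempty : ⋂ K : ℝ, Ioi K ×ˢ Ioi z = ∅ :=
    eq_empty_of_forall_notMem fun p hp => lt_irrefl p.1 (mem_iInter.1 hp p.1).1
  rwa [hempty, measure_empty] at h

end RadonCone

theorem measure_frontier_Ioi_prod_Ioi {μ : Measure (ℝ × ℝ)} {K z : ℝ}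
    (hK : μ {p | p.1 = K ∧ z < p.2} = 0) (hz : μ {p | p.2 = z} = 0) :
    μ (frontier (Ioi K ×ˢ Ioi z)) = 0 := by
  refine measure_mono_null ?_ (measure_union_null hK hz)
  rw [frontier_prod_eq, frontier_Ioi, frontier_Ioi, closure_Ioi, closure_Ioi]
  rintro p (⟨-, hp2⟩ | ⟨hp1, hp2⟩)
  · exact Or.inr hp2
  · rcases (mem_Ici.1 hp2).eq_or_lt with h | h
    · exact Or.inr h.symm
    · exact Or.inl ⟨hp1, h⟩

namespace RegVar

variable {f : ℝ → ℝ} {ρ : ℝ} (hf : RegVar f ρ) (hpos : ∀ t, 0 < f t) (hρ : ρ < 0)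
include hf hpos hρ

theorem exists_tendsto_two_pow_mul :
    ∃ T₀ > 0, Tendsto (fun m : ℕ => f (2 ^ m * T₀)) atTop (𝓝 0) := by
  obtain ⟨q, hq2, hq1⟩ := exists_between (Real.rpow_lt_one_of_one_lt_of_neg one_lt_two hρ)
  have hq0 : 0 ≤ q := (Real.rpow_pos_of_pos two_pos ρ).le.trans hq2.le
  obtain ⟨T₂, hT₂⟩ := eventually_atTop.1 ((hf 2 two_pos).eventually_lt_const hq2)
  set T₀ := max T₂ 1
  have hdecay : ∀ m : ℕ, f (2 ^ m * T₀) ≤ q ^ m * f T₀ := by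
    intro m
    induction m with
    | zero => simp
    | succ m ih =>
      have hT₂m : T₂ ≤ 2 ^ m * T₀ :=
        (le_max_left T₂ 1).trans (le_mul_of_one_le_left (by positivity) (one_le_pow₀ one_le_two))
      calc f (2 ^ (m + 1) * T₀) = f (2 ^ m * T₀ * 2) := by rw [pow_succ, mul_right_comm]
        _ ≤ q * f (2 ^ m * T₀) := ((div_lt_iff₀ (hpos _)).1 (hT₂ _ hT₂m)).le
        _ ≤ q * (q ^ m * f T₀) := mul_le_mul_of_nonneg_left ih hq0
        _ = q ^ (m + 1) * f T₀ := by ring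
  refine ⟨T₀, by positivity, squeeze_zero (fun m => (hpos _).le) hdecay ?_⟩
  simpa using (tendsto_pow_atTop_nhds_zero_of_lt_one hq0 hq1).mul_const (f T₀)

theorem eventually_exists_lt {ε : ℝ} (hε : 0 < ε) :
    ∀ᶠ t in atTop, ∃ s, t ≤ s ∧ s ≤ 2 * t ∧ f s < ε := by
  obtain ⟨T₀, hT₀, hlim⟩ := hf.exists_tendsto_two_pow_mul hpos hρ
  obtain ⟨M, hM⟩ := eventually_atTop.1 (hlim.eventually_lt_const hε)
  filter_upwards [eventually_ge_atTop (2 ^ M * T₀)] with t ht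
  have h1 : 1 ≤ t / T₀ := (one_le_div hT₀).2
    ((le_mul_of_one_le_left hT₀.le (one_le_pow₀ one_le_two)).trans ht)
  obtain ⟨n, hn, hn1⟩ := exists_nat_pow_near h1 one_lt_two
  rw [le_div_iff₀ hT₀] at hn
  rw [div_lt_iff₀ hT₀] at hn1
  refine ⟨2 ^ (n + 1) * T₀, hn1.le, by rw [pow_succ, mul_right_comm]; linarith, hM _ ?_⟩
  have : (2 : ℝ) ^ M < 2 ^ (n + 1) := lt_of_mul_lt_mul_right (ht.trans_lt hn1) hT₀.le
  exact ((pow_lt_pow_iff_right₀ one_lt_two).1 this).le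

end RegVar

theorem eventually_le_four_rpow_mul_of_tendsto {T a : ℝ → ℝ} {γ : ℝ} (hγ : 0 < γ)
    (hT : Antitone T) (hT0 : ∀ u, 0 ≤ T u)
    (hlim : ∀ y, 0 < y → Tendsto (fun t => t * T (a t * y)) atTop (𝓝 (y ^ (-(1 / γ))))) :
    ∀ᶠ t in atTop, ∀ s, t ≤ s → s ≤ 2 * t → a s ≤ 4 ^ γ * a t := by
  have h4 : ((4 : ℝ) ^ γ) ^ (-(1 / γ)) = 4⁻¹ := by
    rw [← Real.rpow_mul (by norm_num), mul_neg, mul_one_div_cancel hγ.ne', Real.rpow_neg_one]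
  obtain ⟨S, hS⟩ := eventually_atTop.1
    ((hlim 1 one_pos).eventually_const_lt (by norm_num : (3 / 4 : ℝ) < 1 ^ (-(1 / γ))))
  filter_upwards
    [(hlim (4 ^ γ) (by positivity)).eventually_lt_const (by rw [h4]; norm_num : _ < (3 / 8 : ℝ)),
    eventually_ge_atTop S, eventually_ge_atTop 0] with t ht htS ht0 s hts hst
  -- otherwise `s * T (a s) ≈ 1` would be at most `2 * t * T (4 ^ γ * a t) ≈ 1 / 2`
  by_contra! h
  have hTle : T (a s * 1) ≤ T (a t * 4 ^ γ) := hT (by rw [mul_one, mul_comm]; exact h.le)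
  have := calc (3 / 4 : ℝ) < s * T (a s * 1) := hS s (htS.trans hts)
    _ ≤ 2 * t * T (a t * 4 ^ γ) := mul_le_mul hst hTle (hT0 _) (by linarith)
  linarith

theorem tendsto_mul_measure_gap_zero {Ω : Type*} [MeasurableSpace Ω] (P : Measure Ω)
    [IsFiniteMeasure P] (X Y : Ω → ℝ) (βinf : ℝ) {ρ γ : ℝ} (hρ : ρ < 0) (hγ : 0 < γ)
    {α a : ℝ → ℝ} (hαpos : ∀ t, 0 < α t) (hapos : ∀ t, 0 < a t) (hαRV : RegVar α ρ)
    (hYtail : ∀ y : ℝ, 0 < y →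
      Tendsto (fun t => t * (P {ω | Y ω > a t * y}).toReal) atTop (𝓝 (y ^ (-(1 / γ)))))
    {μ : Measure (ℝ × ℝ)} (hRadon : RadonCone μ)
    (hconv : VagueConvCone P (fun t ω => ((βinf - X ω) / α t, Y ω / a t)) μ)
    {η z : ℝ} (hη : 0 < η) (hz : 0 < z) :
    Tendsto (fun t => t * (P {ω | η ≤ βinf - X ω ∧ a t * z < Y ω}).toReal) atTop (𝓝 0) := by
  refine tendsto_order.2 ⟨fun b hb => ?_, fun ε hε => ?_⟩
  · filter_upwards [eventually_ge_atTop 0] with t ht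
    exact hb.trans_le (by positivity)
  have hC : 0 < (4 : ℝ) ^ γ := by positivity
  obtain ⟨z₂, hz₂, hz₂0⟩ := hRadon.exists_mem_Ioo_measure_snd_eq_zero
    (by positivity : 0 < z / (2 * 4 ^ γ)) (div_lt_div_of_pos_left hz hC (by linarith))
  have hz₂pos : 0 < z₂ := (by positivity : (0 : ℝ) < z / (2 * 4 ^ γ)).trans hz₂.1
  obtain ⟨N, hN⟩ := eventually_atTop.1
    (((ENNReal.tendsto_toReal ENNReal.zero_ne_top).comp
      (hRadon.tendsto_measure_Ioi_prod_Ioi hz₂pos)).eventually_lt_const hε)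
  obtain ⟨K, hK, hK0⟩ := hRadon.exists_mem_Ioo_measure_fst_eq_zero hz₂pos (max N 0)
  have hKpos : 0 < K := (le_max_right N 0).trans_lt hK.1
  obtain ⟨S, hS⟩ := eventually_atTop.1
    ((hconv _ (measurableSet_Ioi.prod measurableSet_Ioi) ⟨z₂, hz₂pos, fun p hp => hp.2⟩
      (measure_frontier_Ioi_prod_Ioi hK0 hz₂0)).eventually_lt_const
      (hN K ((le_max_left N 0).trans hK.1.le)))
  filter_upwards [hαRV.eventually_exists_lt hαpos hρ (div_pos hη hKpos),
    eventually_le_four_rpow_mul_of_tendsto hγ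
      (fun u v huv => measureReal_mono fun ω (hω : v < Y ω) => huv.trans_lt hω)
      (fun u => measureReal_nonneg) hYtail,
    eventually_ge_atTop S, eventually_ge_atTop 0] with t ⟨s, hts, hst, hαs⟩ hscale htS ht0
  have hsub : {ω | η ≤ βinf - X ω ∧ a t * z < Y ω}
      ⊆ {ω | ((βinf - X ω) / α s, Y ω / a s) ∈ Ioi K ×ˢ Ioi z₂} := by
    rintro ω ⟨hXω, hYω⟩
    refine ⟨(lt_div_iff₀ (hαpos s)).2 ?_, (lt_div_iff₀ (hapos s)).2 ?_⟩
    · rw [lt_div_iff₀ hKpos] at hαs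
      linarith
    · have hz₂C : z₂ * 4 ^ γ < z := (lt_div_iff₀ hC).1 hz₂.2
      calc z₂ * a s ≤ z₂ * (4 ^ γ * a t) := mul_le_mul_of_nonneg_left (hscale s hts hst) hz₂pos.le
        _ = a t * (z₂ * 4 ^ γ) := by ring
        _ ≤ a t * z := mul_le_mul_of_nonneg_left hz₂C.le (hapos t).le
        _ < Y ω := hYω
  calc t * (P {ω | η ≤ βinf - X ω ∧ a t * z < Y ω}).toReal
      ≤ s * (P {ω | ((βinf - X ω) / α s, Y ω / a s) ∈ Ioi K ×ˢ Ioi z₂}).toReal :=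
        mul_le_mul hts (measureReal_mono hsub) measureReal_nonneg (ht0.trans hts)
    _ < ε := hS s (htS.trans hts)

theorem tendsto_mul_measure_mul_gt {Ω : Type*} [MeasurableSpace Ω] (P : Measure Ω)
    [IsFiniteMeasure P] (X Y : Ω → ℝ) (hY : ∀ ω, 0 ≤ Y ω) {βinf : ℝ} (hβinf : 0 < βinf)
    (hX : ∀ ω, X ω ≤ βinf) {γ : ℝ} {a : ℝ → ℝ} (hapos : ∀ t, 0 < a t)
    (hYtail : ∀ y : ℝ, 0 < y →
      Tendsto (fun t => t * (P {ω | Y ω > a t * y}).toReal) atTop (𝓝 (y ^ (-(1 / γ)))))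
    (hgap : ∀ η, 0 < η → ∀ z, 0 < z →
      Tendsto (fun t => t * (P {ω | η ≤ βinf - X ω ∧ a t * z < Y ω}).toReal) atTop (𝓝 0))
    {z : ℝ} (hz : 0 < z) :
    Tendsto (fun t => t * (P {ω | X ω * Y ω > a t * z}).toReal) atTop
      (𝓝 (z ^ (-(1 / γ)) * βinf ^ (1 / γ))) := by
  have hpow : ∀ b, 0 < b → (z / b) ^ (-(1 / γ)) = z ^ (-(1 / γ)) * b ^ (1 / γ) := fun b hb => by
    rw [Real.div_rpow hz.le hb.le, Real.rpow_neg hb.le, div_eq_mul_inv, inv_inv]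
  refine tendsto_order.2 ⟨fun c hc => ?_, fun c hc => ?_⟩
  · have hcont : ContinuousAt (fun b => z ^ (-(1 / γ)) * b ^ (1 / γ)) βinf :=
      continuousAt_const.mul (Real.continuousAt_rpow_const _ _ (Or.inl hβinf.ne'))
    obtain ⟨β', hcβ', hβ'⟩ := (((hcont.eventually (lt_mem_nhds hc)).filter_mono
      nhdsWithin_le_nhds).and (Ioo_mem_nhdsLT hβinf)).exists
    have hlow := (hYtail (z / β') (div_pos hz hβ'.1)).sub
      (hgap (βinf - β') (sub_pos.2 hβ'.2) (z / βinf) (div_pos hz hβinf))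
    rw [sub_zero, hpow β' hβ'.1] at hlow
    filter_upwards [hlow.eventually_const_lt hcβ', eventually_ge_atTop 0] with t ht ht0
    have hsub : {ω | Y ω > a t * (z / β')} ⊆ {ω | X ω * Y ω > a t * z}
        ∪ {ω | βinf - β' ≤ βinf - X ω ∧ a t * (z / βinf) < Y ω} := by
      intro ω (hω : a t * (z / β') < Y ω)
      by_cases hXω : β' < X ω
      · left
        have hYpos : 0 < Y ω := (mul_pos (hapos t) (div_pos hz hβ'.1)).trans hω
        calc a t * z = β' * (a t * (z / β')) := by field_simp [hβ'.1.ne']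
          _ < β' * Y ω := mul_lt_mul_of_pos_left hω hβ'.1
          _ < X ω * Y ω := mul_lt_mul_of_pos_right hXω hYpos
      · refine Or.inr ⟨by linarith, lt_of_le_of_lt ?_ hω⟩
        exact mul_le_mul_of_nonneg_left
          (div_le_div_of_nonneg_left hz.le hβ'.1 hβ'.2.le) (hapos t).le
    calc c < t * (P {ω | Y ω > a t * (z / β')}).toReal
          - t * (P {ω | βinf - β' ≤ βinf - X ω ∧ a t * (z / βinf) < Y ω}).toReal := ht
      _ ≤ t * (P {ω | X ω * Y ω > a t * z}).toReal := by
        rw [sub_le_iff_le_add, ← mul_add]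
        exact mul_le_mul_of_nonneg_left
          ((measureReal_mono hsub).trans (measureReal_union_le _ _)) ht0
  · have hup := hYtail (z / βinf) (div_pos hz hβinf)
    rw [hpow βinf hβinf] at hup
    filter_upwards [hup.eventually_lt_const hc, eventually_ge_atTop 0] with t ht ht0
    have hsub : {ω | X ω * Y ω > a t * z} ⊆ {ω | Y ω > a t * (z / βinf)} := by
      intro ω (hω : a t * z < X ω * Y ω)
      show a t * (z / βinf) < Y ω
      rw [← mul_div_assoc, div_lt_iff₀ hβinf, mul_comm (Y ω)]
      exact hω.trans_le (mul_le_mul_of_nonneg_right (hX ω) (hY ω))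
    exact (mul_le_mul_of_nonneg_left (measureReal_mono hsub) ht0).trans_lt ht

theorem tendsto_zero_of_tendsto_mul {f : ℝ → ℝ} {L : ℝ}
    (h : Tendsto (fun t => t * f t) atTop (𝓝 L)) : Tendsto f atTop (𝓝 0) :=
  (h.div_atTop tendsto_id).congr' <| by
    filter_upwards [eventually_ne_atTop 0] with t ht
    exact mul_div_cancel_left₀ (f t) ht

section TailInversion

variable {T a : ℝ → ℝ} {c e : ℝ} (hT : Antitone T)
  (hlim : ∀ y, 0 < y → Tendsto (fun t => t * T (a t * y)) atTop (𝓝 (y ^ e * c)))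
include hT hlim

theorem pos_of_tendsto_mul_comp (hc : 0 < c) (hapos : ∀ t, 0 < a t) (v : ℝ) : 0 < T v := by
  by_contra! hv
  have hv1 : T (max v 1) ≤ 0 := (hT (le_max_left v 1)).trans hv
  have hev : ∀ y, 0 < y → ∀ᶠ t in atTop, 0 < T (a t * y) := fun y hy => by
    filter_upwards [(hlim y hy).eventually_const_lt (by positivity), eventually_gt_atTop 0]
      with t h ht
    exact pos_of_mul_pos_right h ht.le
  -- `T` would vanish beyond `max v 1`, which forces `a t → 0` and then `T ≤ 0` on `(0, ∞)`
  have hnonpos : ∀ w, 0 < w → T w ≤ 0 := fun w hw => by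
    refine ge_of_tendsto (tendsto_zero_of_tendsto_mul (hlim 1 one_pos)) ?_
    filter_upwards [hev (max v 1 / w) (by positivity)] with t ht
    refine hT (not_lt.1 fun hwt => ht.not_ge ((hT ?_).trans hv1))
    calc max v 1 = w * (max v 1 / w) := by field_simp
      _ ≤ a t * 1 * (max v 1 / w) := mul_le_mul_of_nonneg_right hwt.le (by positivity)
      _ = a t * (max v 1 / w) := by rw [mul_one]
  obtain ⟨t, ht⟩ := (hev 1 one_pos).exists
  exact ht.not_ge (hnonpos _ (by simpa using hapos t))

theorem tendsto_nhdsGT_zero_of_tendsto_mul_comp (hTpos : ∀ u, 0 < T u) :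
    Tendsto T atTop (𝓝[>] 0) := by
  refine tendsto_nhdsWithin_iff.2 ⟨tendsto_order.2 ⟨fun b hb => ?_, fun b hb => ?_⟩,
    .of_forall hTpos⟩
  · exact .of_forall fun u => hb.trans (hTpos u)
  · obtain ⟨t, ht⟩ :=
      ((tendsto_zero_of_tendsto_mul (hlim 1 one_pos)).eventually_lt_const hb).exists
    filter_upwards [eventually_ge_atTop (a t * 1)] with u hu
    exact (hT hu).trans_lt ht

theorem tendsto_div_of_tendsto_mul_comp (hc : 0 < c) (hTpos : ∀ u, 0 < T u) {y : ℝ} (hy : 0 < y) :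
    Tendsto (fun u => T (a (c * (T u)⁻¹) * y) / T u) atTop (𝓝 (y ^ e)) := by
  have hτ : Tendsto (fun u => c * (T u)⁻¹) atTop atTop :=
    (tendsto_inv_nhdsGT_zero.comp
      (tendsto_nhdsGT_zero_of_tendsto_mul_comp hT hlim hTpos)).const_mul_atTop hc
  have h := ((hlim y hy).comp hτ).div_const c
  rw [mul_div_cancel_right₀ _ hc.ne'] at h
  refine h.congr fun u => ?_
  simp only [Function.comp_apply]
  field_simp [(hTpos u).ne']

theorem regVar_of_tendsto_mul_comp (hc : 0 < c) (hapos : ∀ t, 0 < a t) (he : e < 0) :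
    RegVar T e := by
  have hTpos := pos_of_tendsto_mul_comp hT hlim hc hapos
  have hratio := fun y (hy : 0 < y) => tendsto_div_of_tendsto_mul_comp hT hlim hc hTpos hy
  intro x hx
  have hcont := Real.continuousAt_rpow_const x e (Or.inl hx.ne')
  refine tendsto_order.2 ⟨fun b hb => ?_, fun b hb => ?_⟩
  · obtain ⟨y, hby, hxy⟩ := (((hcont.eventually (lt_mem_nhds hb)).filter_mono
      nhdsWithin_le_nhds).and (self_mem_nhdsWithin : Ioi x ∈ 𝓝[>] x)).exists
    have hyx : 1 < y / x := (one_lt_div hx).2 hxy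
    filter_upwards [(hratio (y / x) (by positivity)).eventually_lt_const
      (Real.rpow_lt_one_of_one_lt_of_neg hyx he), (hratio y (hx.trans hxy)).eventually_const_lt hby]
      with u hloc hbu
    have hux : u * x ≤ a (c * (T u)⁻¹) * y := by
      have hu := hT.reflect_lt ((div_lt_one (hTpos u)).1 hloc)
      calc u * x ≤ a (c * (T u)⁻¹) * (y / x) * x := mul_le_mul_of_nonneg_right hu.le hx.le
        _ = a (c * (T u)⁻¹) * y := by field_simp
    exact hbu.trans_le (div_le_div_of_nonneg_right (hT hux) (hTpos u).le)
  · obtain ⟨y, hby, hxy⟩ := (((hcont.eventually (gt_mem_nhds hb)).filter_mono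
      nhdsWithin_le_nhds).and (Ioo_mem_nhdsLT hx)).exists
    have hyx : y / x < 1 := (div_lt_one hx).2 hxy.2
    filter_upwards [(hratio (y / x) (div_pos hxy.1 hx)).eventually_const_lt
      (Real.one_lt_rpow_of_pos_of_lt_one_of_neg (div_pos hxy.1 hx) hyx he),
      (hratio y hxy.1).eventually_lt_const hby] with u hloc hbu
    have hux : a (c * (T u)⁻¹) * y ≤ u * x := by
      have hu := hT.reflect_lt ((one_lt_div (hTpos u)).1 hloc)
      calc a (c * (T u)⁻¹) * y = a (c * (T u)⁻¹) * (y / x) * x := by field_simp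
        _ ≤ u * x := mul_le_mul_of_nonneg_right hu.le hx.le
    exact (div_le_div_of_nonneg_right (hT hux) (hTpos u).le).trans_lt hbu

end TailInversion

theorem stmt_11_general {Ω : Type*} [MeasurableSpace Ω] (P : Measure Ω) [IsProbabilityMeasure P]
    (X Y : Ω → ℝ) (hY : ∀ ω, 0 ≤ Y ω)
    (βinf : ℝ) (hβinf : 0 < βinf) (hX : ∀ ω, 0 ≤ X ω ∧ X ω ≤ βinf)
    (ρ γ : ℝ) (hρ : ρ < 0) (hγ : 0 < γ)
    (α a : ℝ → ℝ) (hαpos : ∀ t, 0 < α t) (hapos : ∀ t, 0 < a t)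
    (hαRV : RegVar α ρ)
    (hYtail : ∀ y : ℝ, 0 < y →
      Tendsto (fun t => t * (P {ω | Y ω > a t * y}).toReal) atTop (𝓝 (y ^ (-(1 / γ)))))
    (μ : Measure (ℝ × ℝ)) (hRadon : RadonCone μ)
    (hconv : VagueConvCone P
      (fun t ω => ((βinf - X ω) / α t, Y ω / a t)) μ) :
    (∀ z : ℝ, 0 < z →
      Tendsto (fun t => t * (P {ω | X ω * Y ω / a t > z}).toReal) atTop
        (𝓝 (z ^ (-(1 / γ)) * βinf ^ (1 / γ)))) ∧
    RegVar (fun x => (P {ω | X ω * Y ω > x}).toReal) (-(1 / γ)) := by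
  have hlim : ∀ z : ℝ, 0 < z → Tendsto (fun t => t * (P {ω | X ω * Y ω > a t * z}).toReal)
      atTop (𝓝 (z ^ (-(1 / γ)) * βinf ^ (1 / γ))) := fun z hz =>
    tendsto_mul_measure_mul_gt P X Y hY hβinf (fun ω => (hX ω).2) hapos hYtail
      (fun η hη z₁ hz₁ => tendsto_mul_measure_gap_zero P X Y βinf hρ hγ hαpos hapos hαRV
        hYtail hRadon hconv hη hz₁) hz
  refine ⟨fun z hz => (hlim z hz).congr fun t => ?_, ?_⟩
  · simp_rw [gt_iff_lt, lt_div_iff₀ (hapos t), mul_comm z]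
  · exact regVar_of_tendsto_mul_comp
      (fun u v huv => measureReal_mono fun ω (hω : v < X ω * Y ω) => huv.trans_lt hω)
      hlim (by positivity) hapos (neg_neg_of_pos (one_div_pos.2 hγ))

theorem stmt_11 {Ω : Type*} [MeasurableSpace Ω] (P : Measure Ω) [IsProbabilityMeasure P]
    (X Y : Ω → ℝ) (hY : ∀ ω, 0 ≤ Y ω)
    (βinf : ℝ) (hβinf : 0 < βinf) (hX : ∀ ω, 0 ≤ X ω ∧ X ω ≤ βinf)
    (ρ γ : ℝ) (hρ : ρ < 0) (hγ : 0 < γ)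
    (α a : ℝ → ℝ) (hαpos : ∀ t, 0 < α t) (hapos : ∀ t, 0 < a t)
    (hαRV : RegVar α ρ) (haRV : RegVar a γ)
    (hYtail : ∀ y : ℝ, 0 < y →
      Tendsto (fun t => t * (P {ω | Y ω > a t * y}).toReal) atTop (𝓝 (y ^ (-(1 / γ)))))
    (μ : Measure (ℝ × ℝ)) (hRadon : RadonCone μ) (hμ : μ ≠ 0)
    (hconv : VagueConvCone P
      (fun t ω => ((βinf - X ω) / α t, Y ω / a t)) μ) :
    (∀ z : ℝ, 0 < z →
      Tendsto (fun t => t * (P {ω | X ω * Y ω / a t > z}).toReal) atTop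
        (𝓝 (z ^ (-(1 / γ)) * βinf ^ (1 / γ)))) ∧
    RegVar (fun x => (P {ω | X ω * Y ω > x}).toReal) (-(1 / γ)) :=
  stmt_11_general P X Y hY βinf hβinf hX ρ γ hρ hγ α a hαpos hapos hαRV hYtail μ hRadon hconv
end

section
/- Let X ~ Beta(1,a) (P[X > x] = (1-x)^a on [0,1], a > 0) and Z independent of X with P[Z > 1 - 1/x] = x^{-b} L(x), b > 0, L slowly varying, and Y = min(X,Z). Let ã(t) = 1/(1 - (1/Ḡ)^{←}(t)) where Ḡ(x) = P[Y > x], so that ã(t)^{a+b}/L(ã(t)) ~ t. Then for all x > y > 0, t·P[1/(1-X) ≤ x·ã(t), 1/(1-Y) > y·ã(t)] → (y^{-a} - x^{-a})·y^{-b} as t → ∞. -/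
/-!
With `Ỹ = 1 / (1 - Y)`, independence gives `h v := 1 / P[Ỹ > v] = v ^ (a + b) / L v`, which is
regularly varying with index `a + b`, and `ã` is the left-continuous inverse of `h`. Squeezing
`h (ã t / k) ≤ t ≤ h (ã t * k)` for `k > 1` and letting `k → 1` gives `t / h (ã t) → 1`. Outside the
null event `X = 1`, the event in question is `{1 - 1/(y ã) < X ≤ 1 - 1/(x ã)} ∩ {Z > 1 - 1/(y ã)}`,
of probability `(y ^ (-a) - x ^ (-a)) * y ^ (-b) * (L (y ã) / L ã) / h ã`; slow variation of `L`
finishes the proof.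
-/

open MeasureTheory Filter Topology Set ProbabilityTheory

namespace RegVar

variable {f g : ℝ → ℝ} {ρ σ : ℝ}

theorem congr (hf : RegVar f ρ) (hfg : f =ᶠ[atTop] g) : RegVar g ρ := by
  intro x hx
  have hmul : Tendsto (fun t => t * x) atTop atTop := tendsto_id.atTop_mul_const hx
  refine (hf x hx).congr' ?_
  filter_upwards [hfg, hmul.eventually hfg] with t ht htx
  rw [ht, htx]

theorem mul (hf : RegVar f ρ) (hg : RegVar g σ) : RegVar (f * g) (ρ + σ) := by
  intro x hx
  rw [Real.rpow_add hx]
  refine ((hf x hx).mul (hg x hx)).congr fun t => ?_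
  simp only [Pi.mul_apply, mul_div_mul_comm]

theorem inv (hf : RegVar f ρ) : RegVar f⁻¹ (-ρ) := by
  intro x hx
  rw [Real.rpow_neg hx.le]
  refine ((hf x hx).inv₀ (Real.rpow_pos_of_pos hx ρ).ne').congr fun t => ?_
  simp only [Pi.inv_apply, inv_div_inv, inv_div]

-- `t / h (u t)` is squeezed between `h (u t * k⁻¹) / h (u t) → k ^ (-ρ)` and
-- `h (u t * k) / h (u t) → k ^ ρ`, both close to `1` for `k` close to `1`.
theorem tendsto_div_apply_of_bounds {h u : ℝ → ℝ} (hh : RegVar h ρ)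
    (hu : Tendsto u atTop atTop) (hpos : ∀ᶠ v in atTop, 0 < h v)
    (hlo : ∀ᶠ t in atTop, ∀ v, 0 < v → v < u t → h v ≤ t)
    (hhi : ∀ᶠ t in atTop, ∀ w, u t < w → t ≤ h w) :
    Tendsto (fun t => t / h (u t)) atTop (𝓝 1) := by
  have hcont : ∀ q : ℝ, Tendsto (fun k : ℝ => k ^ q) (𝓝[>] 1) (𝓝 1) := fun q => by
    simpa using ((Real.continuousAt_rpow_const 1 q (Or.inl one_ne_zero)).tendsto).mono_left
      nhdsWithin_le_nhds
  rw [tendsto_order]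
  refine ⟨fun c hc => ?_, fun c hc => ?_⟩
  · obtain ⟨k, hck, hk⟩ :=
      (((hcont (-ρ)).eventually (lt_mem_nhds hc)).and self_mem_nhdsWithin).exists
    have hk0 : 0 < k := zero_lt_one.trans hk
    have hlim := (hh k⁻¹ (inv_pos.2 hk0)).comp hu
    rw [Real.inv_rpow hk0.le, ← Real.rpow_neg hk0.le] at hlim
    filter_upwards [hlim.eventually (lt_mem_nhds hck), hlo, hu.eventually hpos,
      hu.eventually_gt_atTop 0] with t hc' hlo' hpos' hu0
    refine hc'.trans_le (div_le_div_of_nonneg_right (hlo' _ (by positivity) ?_) hpos'.le)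
    exact mul_lt_of_lt_one_right hu0 (inv_lt_one_of_one_lt₀ hk)
  · obtain ⟨k, hck, hk⟩ :=
      (((hcont ρ).eventually (gt_mem_nhds hc)).and self_mem_nhdsWithin).exists
    filter_upwards [((hh k (zero_lt_one.trans hk)).comp hu).eventually (gt_mem_nhds hck), hhi,
      hu.eventually hpos, hu.eventually_gt_atTop 0] with t hc' hhi' hpos' hu0
    refine (div_le_div_of_nonneg_right (hhi' _ ?_) hpos'.le).trans_lt hc'
    exact lt_mul_of_one_lt_right hu0 hk

end RegVar

theorem regVar_rpow (ρ : ℝ) : RegVar (fun v => v ^ ρ) ρ := by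
  intro x hx
  refine tendsto_const_nhds.congr' ?_
  filter_upwards [eventually_gt_atTop 0] with t ht
  rw [Real.mul_rpow ht.le hx.le, mul_div_cancel_left₀ _ (Real.rpow_pos_of_pos ht ρ).ne']

theorem tendsto_atTop_of_forall_lt_le {h u : ℝ → ℝ}
    (hhi : ∀ᶠ t in atTop, ∀ w, u t < w → t ≤ h w) : Tendsto u atTop atTop := by
  refine tendsto_atTop.2 fun M => ?_
  filter_upwards [hhi, eventually_gt_atTop (h M)] with t ht htM
  by_contra! hlt
  exact (ht M hlt).not_gt htM

noncomputable def leftContInv (F : ℝ → ℝ) (t : ℝ) : ℝ := sInf {s | t ≤ F s}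

section LeftContInv

variable {F : ℝ → ℝ} {t : ℝ}

theorem apply_one_sub_inv_lt_of_lt (hbdd : BddBelow {s | t ≤ F s}) {v : ℝ} (hv : 0 < v)
    (hvt : v < 1 / (1 - leftContInv F t)) : F (1 - 1 / v) < t := by
  have hpos : 0 < 1 - leftContInv F t := by
    by_contra! hle
    exact (hv.trans hvt).not_ge (one_div_nonpos.2 hle)
  have hlt : 1 - 1 / v < leftContInv F t := by
    linarith [(lt_one_div hv hpos).1 hvt]
  by_contra! hle
  exact notMem_of_lt_csInf hlt hbdd hle

theorem le_apply_one_sub_inv_of_lt (hF : MonotoneOn F (Iio 1)) (hne : {s | t ≤ F s}.Nonempty)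
    (hlt : leftContInv F t < 1) {w : ℝ} (hwt : 1 / (1 - leftContInv F t) < w) :
    t ≤ F (1 - 1 / w) := by
  have hpos : 0 < 1 - leftContInv F t := sub_pos.2 hlt
  have hw : 0 < w := (one_div_pos.2 hpos).trans hwt
  have hlt' : leftContInv F t < 1 - 1 / w := by
    linarith [(one_div_lt hpos hw).1 hwt]
  obtain ⟨s, hs, hsw⟩ := exists_lt_of_csInf_lt hne hlt'
  have hw1 : 1 - 1 / w < 1 := by linarith [one_div_pos.2 hw]
  exact hs.trans (hF (hsw.trans hw1) hw1 hsw.le)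

-- Monotonicity is only asked on `Iio 1`: for `F = 1 / Ḡ` it fails beyond the support, where
-- `Ḡ = 0` and `1 / 0 = 0`.
theorem tendsto_div_apply_one_div_one_sub_leftContInv {ρ : ℝ} (hF : MonotoneOn F (Iio 1))
    (hbdd : ∀ᶠ t in atTop, BddBelow {s | t ≤ F s}) (hne : ∀ᶠ t in atTop, ∃ s < 1, t ≤ F s)
    (hreg : RegVar (fun v => F (1 - 1 / v)) ρ) (hpos : ∀ᶠ v in atTop, 0 < F (1 - 1 / v)) :
    Tendsto (fun t => 1 / (1 - leftContInv F t)) atTop atTop ∧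
      Tendsto (fun t => t / F (1 - 1 / (1 / (1 - leftContInv F t)))) atTop (𝓝 1) := by
  have hlt : ∀ᶠ t in atTop, leftContInv F t < 1 := by
    filter_upwards [hbdd, hne] with t hbdd ⟨s, hs1, hs⟩
    exact (csInf_le hbdd hs).trans_lt hs1
  have hlo : ∀ᶠ t in atTop, ∀ v, 0 < v → v < 1 / (1 - leftContInv F t) → F (1 - 1 / v) ≤ t := by
    filter_upwards [hbdd] with t hbdd v hv hvt
    exact (apply_one_sub_inv_lt_of_lt hbdd hv hvt).le
  have hhi : ∀ᶠ t in atTop, ∀ w, 1 / (1 - leftContInv F t) < w → t ≤ F (1 - 1 / w) := by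
    filter_upwards [hne, hlt] with t ⟨s, _, hs⟩ hlt w hwt
    exact le_apply_one_sub_inv_of_lt hF ⟨s, hs⟩ hlt hwt
  have hu := tendsto_atTop_of_forall_lt_le hhi
  exact ⟨hu, hreg.tendsto_div_apply_of_bounds hu hpos hlo hhi⟩

end LeftContInv

theorem inv_one_sub_le_and_inv_one_sub_min_gt_iff {x z A B : ℝ} (hx : x < 1) (hA : 0 < A)
    (hB : 0 < B) :
    ((1 - x)⁻¹ ≤ A ∧ (1 - min x z)⁻¹ > B) ↔
      (x ∈ Ioc (1 - 1 / B) (1 - 1 / A) ∧ z ∈ Ioi (1 - 1 / B)) := by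
  have hx' : 0 < 1 - min x z := sub_pos.2 ((min_le_left x z).trans_lt hx)
  rw [inv_le_comm₀ (sub_pos.2 hx) hA, gt_iff_lt, lt_inv_comm₀ hB hx', mem_Ioc, mem_Ioi,
    one_div, one_div]
  constructor
  · rintro ⟨h1, h2⟩
    refine ⟨⟨?_, by linarith⟩, ?_⟩ <;> linarith [min_le_left x z, min_le_right x z]
  · rintro ⟨⟨h1, h2⟩, h3⟩
    refine ⟨by linarith, ?_⟩
    rcases min_choice x z with h | h <;> rw [h] <;> linarith

section MinModel

variable {Ω : Type*} [MeasurableSpace Ω] {P : Measure Ω} {X Z : Ω → ℝ} {a b : ℝ} {L : ℝ → ℝ}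

def HasBetaOneTail (P : Measure Ω) (X : Ω → ℝ) (a : ℝ) : Prop :=
  ∀ x : ℝ, x ∈ Icc (0 : ℝ) 1 → (P {ω | X ω > x}).toReal = (1 - x) ^ a

-- `1 / (1 - Z)` has the regularly varying tail `x ^ (-b) * L x`.
def HasRegVarTailAtOne (P : Measure Ω) (Z : Ω → ℝ) (b : ℝ) (L : ℝ → ℝ) : Prop :=
  ∀ x : ℝ, 1 ≤ x → (P {ω | Z ω > 1 - 1 / x}).toReal = x ^ (-b) * L x

theorem measure_min_gt_eq_mul (hindep : IndepFun X Z P) (s : ℝ) :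
    P {ω | min (X ω) (Z ω) > s} = P {ω | X ω > s} * P {ω | Z ω > s} := by
  have hset : {ω | min (X ω) (Z ω) > s} = X ⁻¹' Ioi s ∩ Z ⁻¹' Ioi s := by
    ext ω
    simp
  rw [hset]
  exact hindep.measure_inter_preimage_eq_mul _ _ measurableSet_Ioi measurableSet_Ioi

theorem measure_gt_one_sub_one_div (hXtail : HasBetaOneTail P X a) {u : ℝ} (hu : 1 ≤ u) :
    (P {ω | X ω > 1 - 1 / u}).toReal = u ^ (-a) := by
  have hu0 : 0 < u := one_pos.trans_le hu
  have hmem : 1 - 1 / u ∈ Icc (0 : ℝ) 1 :=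
    ⟨by linarith [(div_le_one hu0).2 hu], by linarith [one_div_pos.2 hu0]⟩
  rw [hXtail _ hmem, sub_sub_cancel, one_div, Real.inv_rpow hu0.le, Real.rpow_neg hu0.le]

theorem measure_min_gt_one_sub_one_div (hindep : IndepFun X Z P)
    (hXtail : HasBetaOneTail P X a) (hZtail : HasRegVarTailAtOne P Z b L) {u : ℝ} (hu : 1 ≤ u) :
    (P {ω | min (X ω) (Z ω) > 1 - 1 / u}).toReal = u ^ (-(a + b)) * L u := by
  rw [measure_min_gt_eq_mul hindep, ENNReal.toReal_mul, measure_gt_one_sub_one_div hXtail hu,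
    hZtail u hu, ← mul_assoc, ← Real.rpow_add (one_pos.trans_le hu), neg_add]

theorem one_div_measure_min_gt_one_sub_one_div (hindep : IndepFun X Z P)
    (hXtail : HasBetaOneTail P X a) (hZtail : HasRegVarTailAtOne P Z b L) {u : ℝ} (hu : 1 ≤ u) :
    1 / (P {ω | min (X ω) (Z ω) > 1 - 1 / u}).toReal = (u ^ (-(a + b)) * L u)⁻¹ := by
  rw [measure_min_gt_one_sub_one_div hindep hXtail hZtail hu, one_div]

theorem regVar_one_div_measure_min_gt_one_sub_one_div (hindep : IndepFun X Z P)
    (hXtail : HasBetaOneTail P X a) (hZtail : HasRegVarTailAtOne P Z b L) (hL : RegVar L 0) :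
    RegVar (fun v => 1 / (P {ω | min (X ω) (Z ω) > 1 - 1 / v}).toReal) (a + b) := by
  have h := ((regVar_rpow (-(a + b))).mul hL).inv
  rw [add_zero, neg_neg] at h
  exact h.congr ((eventually_ge_atTop 1).mono fun u hu =>
    (one_div_measure_min_gt_one_sub_one_div hindep hXtail hZtail hu).symm)

variable [IsProbabilityMeasure P]

theorem measure_min_gt_of_neg (hX : ∀ ω, 0 ≤ X ω) (hZ : ∀ ω, 0 ≤ Z ω) {s : ℝ} (hs : s < 0) :
    (P {ω | min (X ω) (Z ω) > s}).toReal = 1 := by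
  have hset : {ω | min (X ω) (Z ω) > s} = univ :=
    eq_univ_of_forall fun ω => hs.trans_le (le_min (hX ω) (hZ ω))
  rw [hset, measure_univ, ENNReal.toReal_one]

theorem measure_min_gt_le (s : ℝ) :
    (P {ω | min (X ω) (Z ω) > s}).toReal ≤ (P {ω | X ω > s}).toReal :=
  measureReal_mono fun ω (hω : s < min (X ω) (Z ω)) => hω.trans_le (min_le_left _ _)

theorem measure_eq_one_eq_zero (ha : 0 < a) (hXtail : HasBetaOneTail P X a) :
    P {ω | X ω = 1} = 0 := by
  have hle : ∀ u : ℝ, 1 ≤ u → (P {ω | X ω = 1}).toReal ≤ u ^ (-a) := fun u hu =>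
    (measureReal_mono fun ω (hω : X ω = 1) => show 1 - 1 / u < X ω by
      rw [hω]; linarith [one_div_pos.2 (one_pos.trans_le hu)]).trans_eq
      (measure_gt_one_sub_one_div hXtail hu)
  have hnonpos : (P {ω | X ω = 1}).toReal ≤ 0 :=
    ge_of_tendsto (tendsto_rpow_neg_atTop ha) ((eventually_ge_atTop 1).mono hle)
  exact (measureReal_eq_zero_iff).1 (hnonpos.antisymm measureReal_nonneg)

theorem measure_min_gt_pos (hindep : IndepFun X Z P)
    (hXtail : HasBetaOneTail P X a) (hZtail : HasRegVarTailAtOne P Z b L)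
    (hX : ∀ ω, 0 ≤ X ω) (hZ : ∀ ω, 0 ≤ Z ω) (hLpos : ∀ x : ℝ, 1 ≤ x → 0 < L x) {s : ℝ}
    (hs : s < 1) :
    0 < (P {ω | min (X ω) (Z ω) > s}).toReal := by
  rcases lt_or_ge s 0 with hs0 | hs0
  · rw [measure_min_gt_of_neg hX hZ hs0]
    exact one_pos
  · have hu : 1 ≤ 1 / (1 - s) := (one_le_div (sub_pos.2 hs)).2 (by linarith)
    rw [← show 1 - 1 / (1 / (1 - s)) = s by rw [one_div_one_div, sub_sub_cancel],
      measure_min_gt_one_sub_one_div hindep hXtail hZtail hu]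
    exact mul_pos (Real.rpow_pos_of_pos (one_pos.trans_le hu) _) (hLpos _ hu)

theorem bddBelow_le_one_div_measure_min_gt (hX : ∀ ω, 0 ≤ X ω) (hZ : ∀ ω, 0 ≤ Z ω) {t : ℝ}
    (ht : 1 < t) : BddBelow {s | t ≤ 1 / (P {ω | min (X ω) (Z ω) > s}).toReal} := by
  refine ⟨0, fun s (hs : t ≤ _) => not_lt.1 fun hs0 => ?_⟩
  rw [measure_min_gt_of_neg hX hZ hs0, div_one] at hs
  linarith

theorem monotoneOn_one_div_measure_min_gt (hindep : IndepFun X Z P)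
    (hXtail : HasBetaOneTail P X a) (hZtail : HasRegVarTailAtOne P Z b L)
    (hX : ∀ ω, 0 ≤ X ω) (hZ : ∀ ω, 0 ≤ Z ω) (hLpos : ∀ x : ℝ, 1 ≤ x → 0 < L x) :
    MonotoneOn (fun s => 1 / (P {ω | min (X ω) (Z ω) > s}).toReal) (Iio 1) :=
  fun _ _ _ hr hsr =>
    one_div_le_one_div_of_le (measure_min_gt_pos hindep hXtail hZtail hX hZ hLpos hr)
      (measureReal_mono fun _ hω => hsr.trans_lt hω)

theorem exists_lt_one_le_one_div_measure_min_gt (ha : 0 < a) (hindep : IndepFun X Z P)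
    (hXtail : HasBetaOneTail P X a) (hZtail : HasRegVarTailAtOne P Z b L)
    (hX : ∀ ω, 0 ≤ X ω) (hZ : ∀ ω, 0 ≤ Z ω) (hLpos : ∀ x : ℝ, 1 ≤ x → 0 < L x) (t : ℝ) :
    ∃ s < 1, t ≤ 1 / (P {ω | min (X ω) (Z ω) > s}).toReal := by
  obtain ⟨u, hut, hu⟩ :=
    (((tendsto_rpow_atTop ha).eventually_ge_atTop t).and (eventually_ge_atTop 1)).exists
  have hu0 : 0 < u := one_pos.trans_le hu
  have hlt : 1 - 1 / u < 1 := by linarith [one_div_pos.2 hu0]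
  refine ⟨1 - 1 / u, hlt, hut.trans ?_⟩
  rw [← inv_inv (u ^ a), ← Real.rpow_neg hu0.le, ← one_div]
  exact one_div_le_one_div_of_le (measure_min_gt_pos hindep hXtail hZtail hX hZ hLpos hlt)
    ((measure_min_gt_le _).trans_eq (measure_gt_one_sub_one_div hXtail hu))

theorem measure_inv_one_sub_le_and_gt (hXm : Measurable X) (hindep : IndepFun X Z P)
    (ha : 0 < a) (hXtail : HasBetaOneTail P X a) (hZtail : HasRegVarTailAtOne P Z b L)
    (hX : ∀ ω, X ω ≤ 1) {A B : ℝ} (hB : 1 ≤ B) (hBA : B < A) :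
    (P {ω | (1 - X ω)⁻¹ ≤ A ∧ (1 - min (X ω) (Z ω))⁻¹ > B}).toReal =
      (B ^ (-a) - A ^ (-a)) * (B ^ (-b) * L B) := by
  have hA : 1 ≤ A := hB.trans hBA.le
  have hae : {ω | (1 - X ω)⁻¹ ≤ A ∧ (1 - min (X ω) (Z ω))⁻¹ > B} =ᵐ[P]
      (X ⁻¹' Ioc (1 - 1 / B) (1 - 1 / A) ∩ Z ⁻¹' Ioi (1 - 1 / B) : Set Ω) := by
    filter_upwards [measure_eq_zero_iff_ae_notMem.1 (measure_eq_one_eq_zero ha hXtail)]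
      with ω hω
    exact propext (inv_one_sub_le_and_inv_one_sub_min_gt_iff ((hX ω).lt_of_ne hω)
      (one_pos.trans_le hA) (one_pos.trans_le hB))
  have hIoc : X ⁻¹' Ioc (1 - 1 / B) (1 - 1 / A) =
      X ⁻¹' Ioi (1 - 1 / B) \ X ⁻¹' Ioi (1 - 1 / A) := by
    rw [← preimage_sdiff, Ioi_sdiff_Ioi]
  have hsub : X ⁻¹' Ioi (1 - 1 / A) ⊆ X ⁻¹' Ioi (1 - 1 / B) :=
    preimage_mono (Ioi_subset_Ioi (by gcongr))
  rw [measure_congr hae,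
    hindep.measure_inter_preimage_eq_mul _ _ measurableSet_Ioc measurableSet_Ioi,
    ENNReal.toReal_mul, ← measureReal_def, hIoc, measureReal_sdiff hsub (hXm measurableSet_Ioi)]
  exact congr_arg₂ _ (congr_arg₂ _ (measure_gt_one_sub_one_div hXtail hB)
    (measure_gt_one_sub_one_div hXtail hA)) (hZtail B hB)

theorem measure_inv_one_sub_le_mul_and_gt_mul (hXm : Measurable X) (hindep : IndepFun X Z P)
    (ha : 0 < a) (hXtail : HasBetaOneTail P X a) (hZtail : HasRegVarTailAtOne P Z b L)
    (hX : ∀ ω, X ω ≤ 1) {x y u : ℝ} (hy : 0 < y) (hyx : y < x) (hyu : 1 ≤ y * u) :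
    (P {ω | (1 - X ω)⁻¹ ≤ x * u ∧ (1 - min (X ω) (Z ω))⁻¹ > y * u}).toReal =
      (y ^ (-a) - x ^ (-a)) * y ^ (-b) * (u ^ (-(a + b)) * L (y * u)) := by
  have hu : 0 < u := pos_of_mul_pos_right (one_pos.trans_le hyu) hy.le
  rw [measure_inv_one_sub_le_and_gt hXm hindep ha hXtail hZtail hX hyu
      (mul_lt_mul_of_pos_right hyx hu), Real.mul_rpow hy.le hu.le,
    Real.mul_rpow (hy.trans hyx).le hu.le, Real.mul_rpow hy.le hu.le, neg_add,
    Real.rpow_add hu]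
  ring

end MinModel

theorem stmt_15_general {Ω : Type*} [MeasurableSpace Ω] (P : Measure Ω) [IsProbabilityMeasure P]
    (X Z : Ω → ℝ) (hXm : Measurable X)
    (hindep : IndepFun X Z P)
    (a b : ℝ) (ha : 0 < a)
    (hXrange : ∀ ω, X ω ∈ Icc (0 : ℝ) 1) (hZrange : ∀ ω, Z ω ∈ Icc (0 : ℝ) 1)
    (hXtail : ∀ x : ℝ, x ∈ Icc (0 : ℝ) 1 → (P {ω | X ω > x}).toReal = (1 - x) ^ a)
    (L : ℝ → ℝ) (hLpos : ∀ x : ℝ, 1 ≤ x → 0 < L x) (hL : RegVar L 0)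
    (hZtail : ∀ x : ℝ, 1 ≤ x →
      (P {ω | Z ω > 1 - 1 / x}).toReal = x ^ (-b) * L x)
    -- `Y = min(X,Z)`, `Ḡ` its survival function, and
    -- `ã(t) = 1/(1 - (1/Ḡ)^←(t))` with `(1/Ḡ)^←` the left-continuous inverse
    (Y : Ω → ℝ) (hYdef : Y = fun ω => min (X ω) (Z ω))
    (Gbar : ℝ → ℝ) (hGbar : Gbar = fun x => (P {ω | Y ω > x}).toReal)
    (atil : ℝ → ℝ)
    (hatil : atil = fun t => 1 / (1 - sInf {s : ℝ | t ≤ 1 / Gbar s})) :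
    ∀ x y : ℝ, 0 < y → y < x →
      Tendsto (fun t =>
          t * (P {ω | (1 - X ω)⁻¹ ≤ x * atil t ∧ (1 - Y ω)⁻¹ > y * atil t}).toReal)
        atTop (𝓝 ((y ^ (-a) - x ^ (-a)) * y ^ (-b))) := by
  intro x y hy hyx
  subst hYdef hGbar hatil
  have hX0 : ∀ ω, 0 ≤ X ω := fun ω => (hXrange ω).1
  have hZ0 : ∀ ω, 0 ≤ Z ω := fun ω => (hZrange ω).1
  obtain ⟨hu, hinv⟩ := tendsto_div_apply_one_div_one_sub_leftContInv
    (monotoneOn_one_div_measure_min_gt hindep hXtail hZtail hX0 hZ0 hLpos)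
    ((eventually_gt_atTop 1).mono fun _ => bddBelow_le_one_div_measure_min_gt hX0 hZ0)
    (Eventually.of_forall
      (exists_lt_one_le_one_div_measure_min_gt ha hindep hXtail hZtail hX0 hZ0 hLpos))
    (regVar_one_div_measure_min_gt_one_sub_one_div hindep hXtail hZtail hL)
    ((eventually_gt_atTop 0).mono fun v hv => one_div_pos.2 (measure_min_gt_pos hindep hXtail
      hZtail hX0 hZ0 hLpos (by linarith [one_div_pos.2 hv])))
  have hLy := (hL y hy).comp hu
  rw [Real.rpow_zero] at hLy
  have hlim := (hinv.mul hLy).const_mul ((y ^ (-a) - x ^ (-a)) * y ^ (-b))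
  rw [mul_one, mul_one] at hlim
  refine hlim.congr' ?_
  filter_upwards [hu.eventually_ge_atTop 1, hu.eventually_ge_atTop (1 / y)] with t hu1 huy
  simp only [Function.comp_apply, leftContInv] at hu1 huy ⊢
  generalize (1 : ℝ) / (1 - sInf _) = u at hu1 huy ⊢
  rw [measure_inv_one_sub_le_mul_and_gt_mul hXm hindep ha hXtail hZtail (fun ω => (hXrange ω).2)
    hy hyx ((div_le_iff₀' hy).1 huy),
    one_div_measure_min_gt_one_sub_one_div hindep hXtail hZtail hu1, div_inv_eq_mul, mul_comm u y]
  field_simp [(hLpos u hu1).ne']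

theorem stmt_15 {Ω : Type*} [MeasurableSpace Ω] (P : Measure Ω) [IsProbabilityMeasure P]
    (X Z : Ω → ℝ) (hXm : Measurable X) (hZm : Measurable Z)
    (hindep : IndepFun X Z P)
    (a b : ℝ) (ha : 0 < a) (hb : 0 < b)
    (hXrange : ∀ ω, X ω ∈ Icc (0 : ℝ) 1) (hZrange : ∀ ω, Z ω ∈ Icc (0 : ℝ) 1)
    (hXtail : ∀ x : ℝ, x ∈ Icc (0 : ℝ) 1 → (P {ω | X ω > x}).toReal = (1 - x) ^ a)
    (L : ℝ → ℝ) (hLpos : ∀ x : ℝ, 1 ≤ x → 0 < L x) (hL : RegVar L 0)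
    (hZtail : ∀ x : ℝ, 1 ≤ x →
      (P {ω | Z ω > 1 - 1 / x}).toReal = x ^ (-b) * L x)
    -- `Y = min(X,Z)`, `Ḡ` its survival function, and
    -- `ã(t) = 1/(1 - (1/Ḡ)^←(t))` with `(1/Ḡ)^←` the left-continuous inverse
    (Y : Ω → ℝ) (hYdef : Y = fun ω => min (X ω) (Z ω))
    (Gbar : ℝ → ℝ) (hGbar : Gbar = fun x => (P {ω | Y ω > x}).toReal)
    (atil : ℝ → ℝ)
    (hatil : atil = fun t => 1 / (1 - sInf {s : ℝ | t ≤ 1 / Gbar s})) :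
    ∀ x y : ℝ, 0 < y → y < x →
      Tendsto (fun t =>
          t * (P {ω | (1 - X ω)⁻¹ ≤ x * atil t ∧ (1 - Y ω)⁻¹ > y * atil t}).toReal)
        atTop (𝓝 ((y ^ (-a) - x ^ (-a)) * y ^ (-b))) :=
  stmt_15_general P X Z hXm hindep a b ha hXrange hZrange hXtail L hLpos hL hZtail Y hYdef Gbar
    hGbar atil hatil
end
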